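/- There exist a problem, a message profile m, and a feasible allocation that is visibly efficient under m but visibly unfair under m. Concretely: with two officers I = {i_1, i_2} (i_1 ranked above i_2), two states S = {s_1, s_2} each of capacity 1, and both officers' messages given by s_1 ≻_{m_i} s_2, the allocation (a_{i_1}, a_{i_2}) = (s_2, s_1) is visibly efficient under m but visibly unfair under m. -/
import Mathlib


attribute [local instance] Classical.propDecidable

section Defs

variable {S T : Type*} {n : ℕ}

/-- A message is an irreflexive and acyclic binary relation on states. -/
def IsMessage (r : S → S → Prop) : Prop :=
  (∀ s, ¬ r s s) ∧ (∀ s, ¬ Relation.TransGen r s s)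

/-- A strict preference: asymmetric, transitive and total (complete) relation. -/
def IsStrictPref (p : S → S → Prop) : Prop :=
  (∀ s s', p s s' → ¬ p s' s) ∧
  (∀ s s' s'', p s s' → p s' s'' → p s s'') ∧
  (∀ s s', s ≠ s' → p s s' ∨ p s' s)

/-- The weak part of a strict preference. -/
def weakPref (p : S → S → Prop) (s s' : S) : Prop := p s s' ∨ s = s'

/-- A message `r` is truthful for a preference `p`. -/
def Truthful (p r : S → S → Prop) : Prop := ∀ s s', r s s' → p s s'

/-- Two states are comparable under a message. -/
def Cmp (r : S → S → Prop) (s s' : S) : Prop := s = s' ∨ r s s' ∨ r s' s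

/-- Feasibility of an allocation with respect to capacities. -/
def Feasible (q : S → ℕ) (a : Fin n → S) : Prop :=
  ∀ s, (Finset.univ.filter fun i => a i = s).card ≤ q s

/-- Visible unfairness of allocation `a` under message profile `m`
(officer `i` has higher priority than `j` iff `i < j`). -/
def VisiblyUnfair (q : S → ℕ) (m : Fin n → S → S → Prop) (a : Fin n → S) : Prop :=
  ∃ i : Fin n,
    (∃ j : Fin n, a i ≠ a j ∧ i < j ∧ m i (a j) (a i)) ∨
    (∃ s : S, a i ≠ s ∧ (Finset.univ.filter fun j => a j = s).card < q s ∧ m i s (a i))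

/-- `G(X, r)`: the set of `r`-maximal (undominated) elements of `X`. -/
def maxSet (r : S → S → Prop) (X : Set S) : Set S :=
  {s | s ∈ X ∧ ∀ s' ∈ X, ¬ r s' s}

/-- `S^k(a)`: states whose capacity is not exhausted by the officers ranked above `k`. -/
def remStates (q : S → ℕ) (a : Fin n → S) (k : Fin n) : Set S :=
  {s | (Finset.univ.filter fun j => j < k ∧ a j = s).card < q s}

/-- A mechanism is visibly fair on message spaces `M`. -/
def VisiblyFair (q : S → ℕ) (M : Fin n → Set (S → S → Prop))
    (ψ : (Fin n → S → S → Prop) → Fin n → S) : Prop :=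
  ∀ m, (∀ i, m i ∈ M i) → ¬ VisiblyUnfair q m (ψ m)

/-- Strategy-proofness. -/
def StrategyProof (M : Fin n → Set (S → S → Prop))
    (ψ : (Fin n → S → S → Prop) → Fin n → S) : Prop :=
  ∀ (i : Fin n) (p : S → S → Prop), IsStrictPref p →
    ∀ m, (∀ j, m j ∈ M j) → Truthful p (m i) →
      ∀ mh ∈ M i, weakPref p (ψ m i) (ψ (Function.update m i mh) i)

/-- Expressiveness. -/
def Expressive (M : Fin n → Set (S → S → Prop))
    (ψ : (Fin n → S → S → Prop) → Fin n → S) : Prop :=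
  ∀ (i : Fin n) (m : Fin n → S → S → Prop), (∀ j, m j ∈ M j) →
    ∀ mh ∈ M i, Cmp (m i) (ψ (Function.update m i mh) i) (ψ m i)

/-- State `s` is available to officer `i` under allocation `a`. -/
def AvailState (q : S → ℕ) (a : Fin n → S) (i : Fin n) (s : S) : Prop :=
  (Finset.univ.filter fun j => a j = s ∧ j < i).card < q s

/-- Availability. -/
def Availability (q : S → ℕ) (M : Fin n → Set (S → S → Prop))
    (ψ : (Fin n → S → S → Prop) → Fin n → S) : Prop :=
  ∀ (i : Fin n) (m : Fin n → S → S → Prop), (∀ j, m j ∈ M j) →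
    ∀ mh ∈ M i, AvailState q (ψ m) i (ψ (Function.update m i mh) i)

/-- Weak availability. -/
def WeakAvailability (q : S → ℕ) (M : Fin n → Set (S → S → Prop))
    (ψ : (Fin n → S → S → Prop) → Fin n → S) : Prop :=
  ∀ (i : Fin n) (p : S → S → Prop), IsStrictPref p →
    ∀ m, (∀ j, m j ∈ M j) → Truthful p (m i) →
      ∀ mh ∈ M i, weakPref p (ψ (Function.update m i mh) i) (ψ m i) →
        AvailState q (ψ m) i (ψ (Function.update m i mh) i)

/-- Coherence. -/
def Coherent (M : Fin n → Set (S → S → Prop))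
    (ψ : (Fin n → S → S → Prop) → Fin n → S) : Prop :=
  ∀ (i : Fin n) (m : Fin n → S → S → Prop), (∀ j, m j ∈ M j) →
    ∀ mh ∈ M i, ψ (Function.update m i mh) i ≠ ψ m i →
      ψ (Function.update m i mh) i ∉
        maxSet (m i) {ψ m i, ψ (Function.update m i mh) i}

/-- Two states lie in a common zone of `Z`. -/
def SameZone (Z : Set (Set S)) (s s' : S) : Prop := ∃ z ∈ Z, s ∈ z ∧ s' ∈ z

/-- A zonal message space with zones `Z`. -/
def ZonalSpace (Z : Set (Set S)) (M : Set (S → S → Prop)) : Prop :=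
  (∀ r ∈ M, ∀ s s', (SameZone Z s s' → Cmp r s s') ∧ (¬ SameZone Z s s' → ¬ Cmp r s s')) ∧
  (∀ R : S → S → Prop, IsStrictPref R →
    ∃ r ∈ M, ∀ z ∈ Z, ∀ s ∈ z, ∀ s' ∈ z, s ≠ s' → (R s s' ↔ r s s'))

/-- Visible efficiency of a feasible allocation `a` under message profile `m`. -/
def VisEff (q : S → ℕ) (m : Fin n → S → S → Prop) (a : Fin n → S) : Prop :=
  ¬ ∃ a' : Fin n → S, a' ≠ a ∧ Feasible q a' ∧ ∀ i, a' i ≠ a i → m i (a' i) (a i)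

/-- Pareto efficiency with respect to a strict preference profile. -/
def ParetoEff (q : S → ℕ) (p : Fin n → S → S → Prop) (a : Fin n → S) : Prop :=
  ¬ ∃ a' : Fin n → S, a' ≠ a ∧ Feasible q a' ∧ ∀ i, a' i ≠ a i → p i (a' i) (a i)

end Defs

/-- Both officers' message: `s₁ ≻ s₂` (states `s₁ = 0`, `s₂ = 1`). -/
def mEx14 : Fin 2 → Fin 2 → Fin 2 → Prop := fun _ s s' => s = 0 ∧ s' = 1

/-- The allocation `(a_{i₁}, a_{i₂}) = (s₂, s₁)`. -/
def aEx14 : Fin 2 → Fin 2 := ![1, 0]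

/-- a feasible allocation that is visibly efficient but visibly unfair. -/
theorem stmt14 :
    (∀ i, IsMessage (mEx14 i)) ∧
    Feasible (fun _ => 1) aEx14 ∧
    VisEff (fun _ => 1) mEx14 aEx14 ∧
    VisiblyUnfair (fun _ => 1) mEx14 aEx14 := by
  refine ⟨?_, ?_, ?_, ?_⟩
  · intro i
    constructor
    · rintro s ⟨h0, h1⟩
      rw [h0] at h1
      exact absurd h1 (by decide)
    · intro s h
      have key : ∀ s t : Fin 2, Relation.TransGen (mEx14 i) s t → s = 0 ∧ t = 1 := by
        intro s t h
        induction h with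
        | single h => exact h
        | tail _ h2 ih => exact ⟨ih.1, h2.2⟩
      obtain ⟨h0, h1⟩ := key s s h
      rw [h0] at h1
      exact absurd h1 (by decide)
  · intro s
    apply Finset.card_le_one.mpr
    intro i hi j hj
    simp only [Finset.mem_filter] at hi hj
    have hij : aEx14 i = aEx14 j := hi.2.trans hj.2.symm
    fin_cases i <;> fin_cases j <;> first | rfl | exact absurd hij (by decide)
  · rintro ⟨a', hne, hfe, h⟩
    have h1 : a' 1 = aEx14 1 := by
      by_contra hc
      have := h 1 hc
      simp [mEx14, aEx14] at this
    have h0 : a' 0 = aEx14 0 := by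
      by_contra hc
      obtain ⟨h00, -⟩ := h 0 hc
      have h10 : a' 1 = 0 := by simpa [aEx14] using h1
      have hall : ∀ i : Fin 2, a' i = 0 := by
        intro i; fin_cases i
        · exact h00
        · exact h10
      have hcard := Finset.card_le_one.mp (hfe 0)
      have := hcard 0 (by simp [h00]) 1 (by simp [h10])
      exact absurd this (by decide)
    exact hne (funext fun i => by fin_cases i <;> assumption)
  · exact ⟨0, Or.inl ⟨1, by decide, by decide, by exact ⟨rfl, rfl⟩⟩⟩
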